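/- Let P = conv{x_1, …, x_n} ⊆ ℝ^p be full-dimensional, let h be an extreme point of P with solid angle ω = ω(N_P(h)), let δ ∈ (0,1), and let g_1, …, g_m be i.i.d. standard Gaussian vectors in ℝ^p. If ω ≥ (1/(2m)) log(1/δ), then the probability that g_j ∉ N_P(h) ∪ (−N_P(h)) for every j = 1, …, m is at most δ; i.e., the noiseless algorithm finds every extreme point whose normal cone has solid angle at least (1/(2m)) log(1/δ) with probability at least 1 − δ. -/

import Mathlib

/-!
At a point of a convex set with nonempty interior the normal cone `N` is pointed: `N ∩ -N ⊆ {0}`.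
The standard Gaussian is symmetric and, for `p ≥ 1`, charges no point, so a single sample lands
in `N ∪ -N` with probability `2ω`; hence all `m` independent samples miss it with probability
`(1 - 2ω)^m ≤ exp (-2mω) ≤ δ`.
-/

open MeasureTheory ProbabilityTheory Metric Set
open scoped Pointwise

/-- The standard Gaussian measure `N(0, I_p)` on `ℝ^p`. -/
noncomputable def stdGaussian (p : ℕ) : Measure (EuclideanSpace ℝ (Fin p)) :=
  (Measure.pi fun _ : Fin p => gaussianReal 0 1).map
    (MeasurableEquiv.toLp 2 (Fin p → ℝ))

/-- The solid angle of a cone `K ⊆ ℝ^p`: its standard Gaussian measure. -/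
noncomputable def solidAngle {p : ℕ} (K : Set (EuclideanSpace ℝ (Fin p))) : ℝ :=
  (stdGaussian p K).toReal

/-- The normal cone of a convex set `C` at a point `x`. -/
def normalCone {p : ℕ} (C : Set (EuclideanSpace ℝ (Fin p))) (x : EuclideanSpace ℝ (Fin p)) :
    Set (EuclideanSpace ℝ (Fin p)) :=
  {w | ∀ y ∈ C, (inner ℝ w (y - x) : ℝ) ≤ 0}

open Filter Topology Real

lemma stdGaussian_eq_stdGaussian_euclideanSpace (p : ℕ) :
    stdGaussian p = ProbabilityTheory.stdGaussian (EuclideanSpace ℝ (Fin p)) :=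
  map_pi_eq_stdGaussian

instance (p : ℕ) : IsProbabilityMeasure (stdGaussian p) := by
  rw [stdGaussian_eq_stdGaussian_euclideanSpace]; infer_instance

instance (p : ℕ) : (stdGaussian p).IsNegInvariant :=
  ⟨by rw [stdGaussian_eq_stdGaussian_euclideanSpace]; exact stdGaussian_map (.neg ℝ)⟩

lemma nullSingletonClass_stdGaussian {p : ℕ} (hp : 0 < p) :
    NullSingletonClass (stdGaussian p) := by
  have : Nonempty (Fin p) := ⟨⟨0, hp⟩⟩
  have : NullSingletonClass (gaussianReal 0 1) := nullSingletonClass_gaussianReal one_ne_zero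
  refine ⟨fun x => ?_⟩
  rw [_root_.stdGaussian, MeasurableEquiv.map_apply]
  exact (subsingleton_singleton.preimage (MeasurableEquiv.toLp 2 _).injective).measure_zero _

lemma isClosed_normalCone {p : ℕ} (C : Set (EuclideanSpace ℝ (Fin p)))
    (x : EuclideanSpace ℝ (Fin p)) : IsClosed (normalCone C x) := by
  simp only [normalCone, ofPred_forall]
  exact isClosed_biInter fun y _ => isClosed_le (by fun_prop) continuous_const

lemma zero_mem_normalCone {p : ℕ} (C : Set (EuclideanSpace ℝ (Fin p)))
    (x : EuclideanSpace ℝ (Fin p)) : 0 ∈ normalCone C x := by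
  simp [normalCone]

lemma eq_zero_of_forall_inner_sub_eq_zero {E : Type*} [NormedAddCommGroup E]
    [InnerProductSpace ℝ E] {C : Set E} (hC : (interior C).Nonempty) {w x : E}
    (hw : ∀ y ∈ C, inner ℝ w (y - x) = 0) : w = 0 := by
  obtain ⟨c, hc⟩ := hC
  have hnear : ∀ᶠ t in 𝓝 (0 : ℝ), c + t • w ∈ C :=
    (Continuous.continuousAt (by fun_prop)).preimage_mem_nhds
      (by simpa using mem_interior_iff_mem_nhds.mp hc)
  obtain ⟨t, htC, ht0⟩ :=
    ((hnear.filter_mono (nhdsWithin_le_nhds (s := {0}ᶜ))).and self_mem_nhdsWithin).exists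
  have htw : t * ‖w‖ ^ 2 = 0 := by
    have hct := hw _ htC
    rwa [add_sub_right_comm, inner_add_right, hw c (interior_subset hc), inner_smul_right,
      real_inner_self_eq_norm_sq, zero_add] at hct
  simpa using (mul_eq_zero.mp htw).resolve_left ht0

lemma normalCone_inter_neg_subset {p : ℕ} {C : Set (EuclideanSpace ℝ (Fin p))}
    (hC : (interior C).Nonempty) (x : EuclideanSpace ℝ (Fin p)) :
    normalCone C x ∩ -normalCone C x ⊆ {0} := by
  rintro w ⟨hw, hw'⟩
  refine eq_zero_of_forall_inner_sub_eq_zero hC (x := x) fun y hy => le_antisymm (hw y hy) ?_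
  simpa [inner_neg_left] using hw' y hy

lemma measureReal_union_neg {G : Type*} [MeasurableSpace G] [InvolutiveNeg G] [MeasurableNeg G]
    (μ : Measure G) [IsFiniteMeasure μ] [μ.IsNegInvariant] [NullSingletonClass μ] {K : Set G}
    (hK : MeasurableSet K) (hK0 : (K ∩ -K).Subsingleton) :
    μ.real (K ∪ -K) = 2 * μ.real K := by
  rw [measureReal_union₀ hK.neg.nullMeasurableSet (hK0.measure_zero μ), measureReal_def,
    measureReal_def, Measure.measure_neg, two_mul]

lemma stdGaussian_real_compl_union_neg_normalCone_le {p : ℕ} {C : Set (EuclideanSpace ℝ (Fin p))}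
    (hC : (interior C).Nonempty) (x : EuclideanSpace ℝ (Fin p)) :
    (stdGaussian p).real (normalCone C x ∪ -normalCone C x)ᶜ ≤
      exp (-(2 * solidAngle (normalCone C x))) := by
  rw [solidAngle, ← measureReal_def]
  rcases Nat.eq_zero_or_pos p with rfl | hp
  · have : (normalCone C x ∪ -normalCone C x)ᶜ = ∅ := by
      rw [compl_empty_iff, eq_univ_iff_forall]
      exact fun w => Or.inl (Subsingleton.elim 0 w ▸ zero_mem_normalCone C x)
    simp only [this, measureReal_empty, (exp_pos _).le]
  · have hK := (isClosed_normalCone C x).measurableSet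
    have := nullSingletonClass_stdGaussian hp
    rw [probReal_compl_eq_one_sub (hK.union hK.neg), measureReal_union_neg _ hK
      (subsingleton_singleton.anti (normalCone_inter_neg_subset hC x))]
    linarith [add_one_le_exp (-(2 * (stdGaussian p).real (normalCone C x)))]

lemma pow_le_of_le_exp_neg {q a δ : ℝ} {m : ℕ} (hq : 0 ≤ q) (hqa : q ≤ exp (-a))
    (hδ : 0 < δ) (hma : log (1 / δ) ≤ m * a) : q ^ m ≤ δ :=
  calc q ^ m ≤ exp (-a) ^ m := pow_le_pow_left₀ hq hqa m
    _ = exp (-(m * a)) := by rw [← exp_nat_mul, mul_neg]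
    _ ≤ exp (log δ) := exp_le_exp.mpr (by rw [one_div, log_inv] at hma; linarith)
    _ = δ := exp_log hδ

lemma measureReal_pi_setOf_forall_mem {ι α : Type*} [Fintype ι] [MeasurableSpace α]
    (μ : Measure α) [IsFiniteMeasure μ] (s : Set α) :
    (Measure.pi fun _ : ι => μ).real {g | ∀ j, g j ∈ s} = μ.real s ^ Fintype.card ι := by
  have : {g : ι → α | ∀ j, g j ∈ s} = univ.pi fun _ => s := by ext; simp
  rw [this, measureReal_def, Measure.pi_pi, Finset.prod_const, ENNReal.toReal_pow,
    Finset.card_univ, measureReal_def]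

theorem noiseless_algorithm_finds_extreme_point_general
    (p m : ℕ) (hm : 0 < m)
    (P : Set (EuclideanSpace ℝ (Fin p)))
    (hfull : (interior P).Nonempty)
    (h : EuclideanSpace ℝ (Fin p))
    (ω : ℝ) (hω : ω = solidAngle (normalCone P h))
    (δ : ℝ) (hδ : δ ∈ Set.Ioo (0 : ℝ) 1)
    (hωge : 1 / (2 * m) * Real.log (1 / δ) ≤ ω) :
    ((Measure.pi fun _ : Fin m => stdGaussian p)
      {g | ∀ j : Fin m, g j ∉ normalCone P h ∪ -normalCone P h}).toReal ≤ δ := by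
  have hlog : Real.log (1 / δ) ≤ m * (2 * ω) := by
    rw [one_div_mul_eq_div, div_le_iff₀ (by positivity)] at hωge
    linarith
  simp_rw [← mem_compl_iff]
  rw [← measureReal_def, measureReal_pi_setOf_forall_mem, Fintype.card_fin]
  refine pow_le_of_le_exp_neg measureReal_nonneg ?_ hδ.1 hlog
  rw [hω]
  exact stdGaussian_real_compl_union_neg_normalCone_le hfull h

/-- Lemma (noiseless algorithm): if `ω ≥ (1/(2m)) log(1/δ)`, then the probability that all
`m` i.i.d. Gaussian vectors miss the extreme point `h` is at most `δ`; i.e. the noiseless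
algorithm finds every extreme point of solid angle at least `(1/(2m)) log(1/δ)` with
probability at least `1 − δ`. -/
theorem noiseless_algorithm_finds_extreme_point
    (p n m : ℕ) (hm : 0 < m) (x : Fin n → EuclideanSpace ℝ (Fin p))
    (P : Set (EuclideanSpace ℝ (Fin p))) (hP : P = convexHull ℝ (Set.range x))
    (hfull : (interior P).Nonempty)
    (h : EuclideanSpace ℝ (Fin p)) (hh : h ∈ Set.extremePoints ℝ P)
    (ω : ℝ) (hω : ω = solidAngle (normalCone P h))
    (δ : ℝ) (hδ : δ ∈ Set.Ioo (0 : ℝ) 1)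
    (hωge : 1 / (2 * m) * Real.log (1 / δ) ≤ ω) :
    ((Measure.pi fun _ : Fin m => stdGaussian p)
      {g | ∀ j : Fin m, g j ∉ normalCone P h ∪ -normalCone P h}).toReal ≤ δ :=
  noiseless_algorithm_finds_extreme_point_general p m hm P hfull h ω hω δ hδ hωge
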